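/- Let Ω ⊆ ℂ^d be open connected and X ⊆ H(Ω) satisfy the hypotheses of Theorem 3.3. If Ω is NOT an X-domain of holomorphy, then there exist open balls B₁ ⊆ cl(B₁) ⊆ B₂ ∩ Ω with B₂ ∩ Ω ≠ ∅, B₂ ∩ Ωᶜ ≠ ∅, such that every f ∈ X restricted to B₁ admits a bounded holomorphic extension to B₂. -/

import Mathlib

open Metric Set Filter

/-- `f` is extendable in the sense of Riemann domains from the domain `Ω`. -/
def ExtendableRiemann {d : ℕ} (Ω : Set (EuclideanSpace ℂ (Fin d)))
    (f : EuclideanSpace ℂ (Fin d) → ℂ) : Prop :=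
  ∃ (c₁ c₂ : EuclideanSpace ℂ (Fin d)) (r₁ r₂ : ℝ), 0 < r₁ ∧ 0 < r₂ ∧
    closedBall c₁ r₁ ⊆ ball c₂ r₂ ∩ Ω ∧
    (ball c₂ r₂ ∩ Ω).Nonempty ∧ (ball c₂ r₂ ∩ Ωᶜ).Nonempty ∧
    ∃ (F : EuclideanSpace ℂ (Fin d) → ℂ) (M : ℝ),
      DifferentiableOn ℂ F (ball c₂ r₂) ∧
      (∀ z ∈ ball c₂ r₂, ‖F z‖ ≤ M) ∧
      EqOn F f (ball c₁ r₁)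

/-! Baire category. For centres in a countable dense set, rational radii and an integer bound `M`,
the `f ∈ X` whose restriction to the small ball extends holomorphically to the big ball with bound
`M` form countably many sets covering `X`. Each is closed: Schwarz's lemma bounds the first-order
Taylor remainders of functions bounded by `M` uniformly, so their pointwise limits along an
ultrafilter are again holomorphic. Some set therefore has an interior point `f₀`, and every `f` is
`t⁻¹ ((f₀ + t f) - f₀)` for a small `t ≠ 0`. -/

open Asymptotics Topology

theorem tendsto_limUnder_of_norm_le {G ι : Type*} [SeminormedAddCommGroup G] [ProperSpace G]
    (φ : Ultrafilter ι) {u : ι → G} {M : ℝ} (h : ∀ n, ‖u n‖ ≤ M) :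
    Tendsto u φ (𝓝 (limUnder φ u)) := by
  obtain ⟨a, -, ha⟩ := (isCompact_closedBall (0 : G) M).ultrafilter_le_nhds (φ.map u) <| by
    rw [Ultrafilter.coe_map, le_principal_iff]
    exact mem_map.2 (univ_mem' fun n => mem_closedBall_zero_iff.2 (h n))
  exact tendsto_nhds_limUnder ⟨a, ha⟩

theorem hasFDerivAt_of_norm_sub_sub_le_sq {𝕜 E F : Type*} [NontriviallyNormedField 𝕜]
    [NormedAddCommGroup E] [NormedSpace 𝕜 E] [NormedAddCommGroup F] [NormedSpace 𝕜 F]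
    {g : E → F} {L : E →L[𝕜] F} {z₀ : E} {R C : ℝ}
    (hR : 0 < R) (h : ∀ z ∈ ball z₀ R, ‖g z - g z₀ - L (z - z₀)‖ ≤ C * ‖z - z₀‖ ^ 2) :
    HasFDerivAt g L z₀ := by
  have hO : (fun z => g z - g z₀ - L (z - z₀)) =O[𝓝 z₀] (fun z => ‖z - z₀‖ ^ 2) :=
    IsBigO.of_bound C <| eventually_of_mem (ball_mem_nhds z₀ hR) fun z hz => by
      simpa [abs_of_nonneg (sq_nonneg ‖z - z₀‖)] using h z hz
  exact .of_isLittleO <| hO.trans_isLittleO <|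
    (isLittleO_norm_pow_id one_lt_two).comp_tendsto (tendsto_sub_nhds_zero_iff.2 tendsto_id)

section Analytic
variable {E F : Type*} [NormedAddCommGroup E] [NormedSpace ℂ E] [NormedAddCommGroup F]
  [NormedSpace ℂ F]

theorem norm_sub_sub_fderiv_le_of_mapsTo_ball {f : E → F} {c z : E} {R K : ℝ}
    (hd : DifferentiableOn ℂ f (ball c R)) (hK : MapsTo f (ball c R) (closedBall (f c) K))
    (hz : z ∈ ball c R) :
    ‖f z - f c - fderiv ℂ f c (z - c)‖ ≤ 2 * K * (‖z - c‖ / R) ^ 2 := by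
  have hR : 0 < R := pos_of_mem_ball hz
  set f' := fderiv ℂ f c
  have hf' : ‖f'‖ ≤ K / R := Complex.norm_fderiv_le_div_of_mapsTo_ball hd hK hR
  have hK0 : 0 ≤ K := dist_nonneg.trans (hK hz)
  set g : E → F := fun w => f w - f c - f' (w - c)
  have hgc : g c = 0 := by simp [g]
  have hgd : DifferentiableOn ℂ g (ball c R) :=
    (hd.sub_const _).sub (f'.differentiable.comp (differentiable_id.sub_const c)).differentiableOn
  have hgK : MapsTo g (ball c R) (closedBall (g c) (2 * K)) := by
    intro w hw
    have hw' : ‖w - c‖ ≤ R := (mem_ball_iff_norm.mp hw).le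
    rw [hgc, mem_closedBall_zero_iff]
    calc ‖g w‖ ≤ ‖f w - f c‖ + ‖f' (w - c)‖ := norm_sub_le _ _
      _ ≤ K + K / R * R := by
          gcongr
          · exact mem_closedBall_iff_norm.mp (hK hw)
          · exact f'.le_of_opNorm_le hf' _ |>.trans (by gcongr)
      _ = 2 * K := by field_simp; ring
  have hgo : (g · - g c) =o[𝓝 c] (fun w => ‖w - c‖ ^ 1) := by
    simpa [hgc, g] using
      ((hd.differentiableAt (ball_mem_nhds c hR)).hasFDerivAt.isLittleO).norm_right
  simpa only [hgc, dist_eq_norm, sub_zero] using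
    Complex.dist_le_mul_div_pow_of_mapsTo_ball_of_isLittleO hgd hgK hgo hz

theorem DifferentiableOn.of_tendsto_of_norm_le [FiniteDimensional ℂ E] [FiniteDimensional ℂ F]
    {ι : Type*} {l : Filter ι} [l.NeBot] {U : Set E} (hU : IsOpen U) {f : ι → E → F} {g : E → F}
    {M : ℝ} (hd : ∀ n, DifferentiableOn ℂ (f n) U) (hM : ∀ n, ∀ z ∈ U, ‖f n z‖ ≤ M)
    (hlim : ∀ z ∈ U, Tendsto (fun n => f n z) l (𝓝 (g z))) :
    DifferentiableOn ℂ g U := by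
  intro z₀ hz₀
  obtain ⟨R, hR, hRU⟩ := Metric.isOpen_iff.mp hU z₀ hz₀
  have hmaps : ∀ n, MapsTo (f n) (ball z₀ R) (closedBall (f n z₀) (M + M)) := fun n z hz =>
    mem_closedBall_iff_norm.2 <|
      (norm_sub_le _ _).trans (add_le_add (hM n z (hRU hz)) (hM n z₀ hz₀))
  set φ := Ultrafilter.of l
  have hL := tendsto_limUnder_of_norm_le φ fun n =>
    Complex.norm_fderiv_le_div_of_mapsTo_ball ((hd n).mono hRU) (hmaps n) hR
  set L := limUnder φ fun n => fderiv ℂ (f n) z₀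
  have hlimφ : ∀ z ∈ ball z₀ R, Tendsto (fun n => f n z) φ (𝓝 (g z)) := fun z hz =>
    (hlim z (hRU hz)).mono_left (Ultrafilter.of_le l)
  refine (hasFDerivAt_of_norm_sub_sub_le_sq (L := L) (C := 2 * (M + M) / R ^ 2) hR fun z hz => ?_)
    |>.differentiableAt.differentiableWithinAt
  refine le_of_tendsto (((hlimφ z hz).sub (hlimφ z₀ (mem_ball_self hR))).sub
    ((ContinuousLinearMap.apply ℂ F (z - z₀)).continuous.tendsto L |>.comp hL)).norm
    (Eventually.of_forall fun n => ?_)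
  calc _ ≤ 2 * (M + M) * (‖z - z₀‖ / R) ^ 2 :=
        norm_sub_sub_fderiv_le_of_mapsTo_ball ((hd n).mono hRU) (hmaps n) hz
    _ = _ := by ring

end Analytic

section Extension
variable {E F : Type*} [NormedAddCommGroup E] [NormedSpace ℂ E] [NormedAddCommGroup F]
  [NormedSpace ℂ F]

def HasBoundedHolomorphicExtension (B₁ B₂ : Set E) (M : ℝ) (f : E → F) : Prop :=
  ∃ G : E → F, DifferentiableOn ℂ G B₂ ∧ (∀ z ∈ B₂, ‖G z‖ ≤ M) ∧ EqOn G f B₁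

namespace HasBoundedHolomorphicExtension

variable {B₁ B₂ B₁' B₂' : Set E} {M M' : ℝ} {f g : E → F}

theorem mono (h : HasBoundedHolomorphicExtension B₁ B₂ M f) (hB₁ : B₁' ⊆ B₁) (hB₂ : B₂' ⊆ B₂)
    (hM : M ≤ M') : HasBoundedHolomorphicExtension B₁' B₂' M' f := by
  obtain ⟨G, hGd, hGM, hGf⟩ := h
  exact ⟨G, hGd.mono hB₂, fun z hz => (hGM z (hB₂ hz)).trans hM, hGf.mono hB₁⟩

theorem of_add_smul {t : ℂ} (ht : t ≠ 0) (hf : HasBoundedHolomorphicExtension B₁ B₂ M f)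
    (hfg : HasBoundedHolomorphicExtension B₁ B₂ M (f + t • g)) :
    HasBoundedHolomorphicExtension B₁ B₂ (‖t⁻¹‖ * (M + M)) g := by
  obtain ⟨G₀, hG₀d, hG₀M, hG₀f⟩ := hf
  obtain ⟨G₁, hG₁d, hG₁M, hG₁f⟩ := hfg
  refine ⟨t⁻¹ • (G₁ - G₀), (hG₁d.sub hG₀d).const_smul _, fun z hz => ?_, fun z hz => ?_⟩
  · rw [Pi.smul_apply, norm_smul]
    gcongr
    exact (norm_sub_le _ _).trans (add_le_add (hG₁M z hz) (hG₀M z hz))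
  · simp [hG₁f hz, hG₀f hz, ht]

end HasBoundedHolomorphicExtension

theorem isClosed_setOf_hasBoundedHolomorphicExtension [FiniteDimensional ℂ E]
    [FiniteDimensional ℂ F] {X : Type*} [TopologicalSpace X] [SequentialSpace X]
    {ι : X → E → F} {B₁ B₂ : Set E} (hB₂ : IsOpen B₂) (hB : B₁ ⊆ B₂) (M : ℝ)
    (hptw : ∀ (g : ℕ → X) (f : X), Tendsto g atTop (𝓝 f) →
      ∀ z ∈ B₁, Tendsto (fun n => ι (g n) z) atTop (𝓝 (ι f z))) :
    IsClosed {f | HasBoundedHolomorphicExtension B₁ B₂ M (ι f)} := by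
  refine IsSeqClosed.isClosed fun g f hg hgf => ?_
  choose G hGd hGM hGf using hg
  set 𝒰 := Ultrafilter.of (atTop : Filter ℕ)
  have hG : ∀ z ∈ B₂, Tendsto (G · z) 𝒰 (𝓝 (limUnder 𝒰 (G · z))) := fun z hz =>
    tendsto_limUnder_of_norm_le 𝒰 fun n => hGM n z hz
  refine ⟨fun z => limUnder 𝒰 (G · z), .of_tendsto_of_norm_le hB₂ hGd hGM hG,
    fun z hz => le_of_tendsto' (hG z hz).norm fun n => hGM n z hz,
    fun z hz => tendsto_nhds_unique (hG z (hB hz)) ?_⟩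
  exact ((hptw g f hgf z hz).mono_left (Ultrafilter.of_le _)).congr fun n => (hGf n hz).symm

end Extension

theorem exists_add_smul_mem_of_mem_interior {𝕜 X : Type*} [NontriviallyNormedField 𝕜]
    [AddCommGroup X] [Module 𝕜 X] [TopologicalSpace X] [ContinuousAdd X] [ContinuousSMul 𝕜 X]
    {s : Set X} {x : X} (hx : x ∈ interior s) (y : X) : ∃ t : 𝕜, t ≠ 0 ∧ x + t • y ∈ s := by
  have hcont : Tendsto (fun t : 𝕜 => x + t • y) (𝓝[≠] 0) (𝓝 x) :=
    ((continuous_const.add (continuous_id.smul continuous_const)).tendsto' 0 x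
      (by simp)).mono_left nhdsWithin_le_nhds
  obtain ⟨t, hts, ht⟩ :=
    ((hcont.eventually (mem_interior_iff_mem_nhds.1 hx)).and self_mem_nhdsWithin).exists
  exact ⟨t, ht, hts⟩

section RationalBalls
variable {α : Type*} [PseudoMetricSpace α] {D : Set α}

theorem Dense.exists_rat_closedBall_subset_ball (hD : Dense D) (c : α) {r : ℝ}
    (hr : 0 < r) : ∃ c' ∈ D, ∃ q : ℚ, 0 < q ∧ closedBall c' q ⊆ ball c r := by
  obtain ⟨c', hc'D, hc'⟩ := hD.exists_dist_lt c (half_pos hr)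
  obtain ⟨q, hq₀, hq⟩ := exists_rat_btwn (half_pos hr)
  refine ⟨c', hc'D, q, mod_cast hq₀, closedBall_subset_ball' ?_⟩
  rw [dist_comm]
  linarith

theorem Dense.exists_rat_ball_between [ProperSpace α] (hD : Dense D) {K : Set α}
    (hK : IsClosed K) {c : α} {r : ℝ} (h : K ⊆ ball c r) :
    ∃ c' ∈ D, ∃ q : ℚ, K ⊆ ball c' q ∧ ball c' q ⊆ ball c r := by
  obtain ⟨r', hr', hKr'⟩ := exists_lt_subset_ball hK h
  have hδ : 0 < (r - r') / 3 := by linarith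
  obtain ⟨c', hc'D, hc'⟩ := hD.exists_dist_lt c hδ
  obtain ⟨q, hq₁, hq₂⟩ :=
    exists_rat_btwn (show r' + (r - r') / 3 < r' + 2 * ((r - r') / 3) by linarith)
  refine ⟨c', hc'D, q, hKr'.trans (ball_subset_ball' ?_), ball_subset_ball' ?_⟩
  · linarith
  · rw [dist_comm]
    linarith

end RationalBalls

def IsExtensionBallPair {α : Type*} [PseudoMetricSpace α] (Ω : Set α) (c₁ c₂ : α) (r₁ r₂ : ℝ) :
    Prop :=
  0 < r₁ ∧ closedBall c₁ r₁ ⊆ ball c₂ r₂ ∩ Ω ∧ (ball c₂ r₂ ∩ Ωᶜ).Nonempty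

theorem ExtendableRiemann.exists_rat_of_dense {d : ℕ} {Ω : Set (EuclideanSpace ℂ (Fin d))}
    {f : EuclideanSpace ℂ (Fin d) → ℂ} (hf : ExtendableRiemann Ω f)
    {D : Set (EuclideanSpace ℂ (Fin d))} (hD : Dense D) :
    ∃ c₁ ∈ D, ∃ c₂ ∈ D, ∃ (r₁ r₂ : ℚ) (M : ℕ), IsExtensionBallPair Ω c₁ c₂ r₁ r₂ ∧
      HasBoundedHolomorphicExtension (ball c₁ r₁) (ball c₂ r₂) M f := by
  obtain ⟨c₁, c₂, r₁, r₂, hr₁, -, hsub, -, ⟨x, hx₂, hxΩ⟩, G, M, hG⟩ := hf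
  obtain ⟨c₁', hc₁', q₁, hq₁, h₁⟩ := hD.exists_rat_closedBall_subset_ball c₁ hr₁
  have h₁' : closedBall c₁' q₁ ⊆ ball c₂ r₂ ∩ Ω := h₁.trans (ball_subset_closedBall.trans hsub)
  obtain ⟨c₂', hc₂', q₂, hK, h₂⟩ := hD.exists_rat_ball_between
    ((isCompact_closedBall c₁' q₁).insert x).isClosed
    (insert_subset hx₂ (h₁'.trans inter_subset_left))
  refine ⟨c₁', hc₁', c₂', hc₂', q₁, q₂, ⌈M⌉₊,
    ⟨mod_cast hq₁, subset_inter ((subset_insert _ _).trans hK) (h₁'.trans inter_subset_right),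
      x, hK (mem_insert _ _), hxΩ⟩,
    HasBoundedHolomorphicExtension.mono ⟨G, hG⟩ (ball_subset_closedBall.trans h₁) h₂
      (Nat.le_ceil M)⟩

theorem stmt15_general {d : ℕ} (Ω : Set (EuclideanSpace ℂ (Fin d)))
    (X : Type*) [AddCommGroup X] [Module ℂ X] [MetricSpace X] [CompleteSpace X]
    [IsTopologicalAddGroup X] [ContinuousSMul ℂ X]
    (ι : X →ₗ[ℂ] (EuclideanSpace ℂ (Fin d) → ℂ))
    (hptw : ∀ (g : ℕ → X) (f : X), Filter.Tendsto g Filter.atTop (nhds f) →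
      ∀ z ∈ Ω, Filter.Tendsto (fun n => ι (g n) z) Filter.atTop (nhds (ι f z)))
    (hnot : ∀ f : X, ExtendableRiemann Ω (ι f)) :
    ∃ (c₁ c₂ : EuclideanSpace ℂ (Fin d)) (r₁ r₂ : ℝ), 0 < r₁ ∧ 0 < r₂ ∧
      closedBall c₁ r₁ ⊆ ball c₂ r₂ ∩ Ω ∧
      (ball c₂ r₂ ∩ Ω).Nonempty ∧ (ball c₂ r₂ ∩ Ωᶜ).Nonempty ∧
      ∀ f : X, ∃ (F : EuclideanSpace ℂ (Fin d) → ℂ) (M : ℝ),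
        DifferentiableOn ℂ F (ball c₂ r₂) ∧
        (∀ z ∈ ball c₂ r₂, ‖F z‖ ≤ M) ∧
        EqOn F (ι f) (ball c₁ r₁) := by
  obtain ⟨D, hDc, hD⟩ := TopologicalSpace.exists_countable_dense (EuclideanSpace ℂ (Fin d))
  have := hDc.to_subtype
  let T : {p : D × D × ℚ × ℚ // IsExtensionBallPair Ω p.1 p.2.1 p.2.2.1 p.2.2.2} × ℕ → Set X :=
    fun ⟨⟨⟨c₁, c₂, r₁, r₂⟩, _⟩, M⟩ =>
      {f | HasBoundedHolomorphicExtension (ball c₁.1 r₁) (ball c₂.1 r₂) M (ι f)}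
  have hclosed : ∀ i, IsClosed (T i) := fun ⟨⟨⟨_, _, _, _⟩, _, hsub, _⟩, M⟩ =>
    isClosed_setOf_hasBoundedHolomorphicExtension isOpen_ball
      (ball_subset_closedBall.trans (hsub.trans inter_subset_left)) M
      fun g f hg z hz => hptw g f hg z (hsub (ball_subset_closedBall hz)).2
  have hcover : ⋃ i, T i = univ := iUnion_eq_univ_iff.2 fun f => by
    obtain ⟨c₁, hc₁, c₂, hc₂, r₁, r₂, M, hpair, hext⟩ := (hnot f).exists_rat_of_dense hD
    exact ⟨⟨⟨⟨⟨c₁, hc₁⟩, ⟨c₂, hc₂⟩, r₁, r₂⟩, hpair⟩, M⟩, hext⟩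
  obtain ⟨⟨⟨⟨c₁, c₂, r₁, r₂⟩, hr₁, hsub, hout⟩, M⟩, f₀, hf₀⟩ :=
    nonempty_interior_of_iUnion_of_closed hclosed hcover
  refine ⟨c₁, c₂, r₁, r₂, hr₁, pos_of_mem_ball hout.some_mem.1, hsub,
    ⟨c₁, hsub (mem_closedBall_self hr₁.le)⟩, hout, fun f => ?_⟩
  obtain ⟨t, ht, hmem⟩ := exists_add_smul_mem_of_mem_interior (𝕜 := ℂ) hf₀ f
  have h₀ := interior_subset hf₀
  simp only [T, mem_ofPred_eq, map_add, map_smul] at h₀ hmem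
  obtain ⟨G, hG⟩ := h₀.of_add_smul ht hmem
  exact ⟨G, _, hG⟩

theorem stmt15 {d : ℕ} (Ω : Set (EuclideanSpace ℂ (Fin d)))
    (hΩo : IsOpen Ω) (hΩc : IsConnected Ω)
    (X : Type*) [AddCommGroup X] [Module ℂ X] [MetricSpace X] [CompleteSpace X]
    [IsTopologicalAddGroup X] [ContinuousSMul ℂ X]
    (ι : X →ₗ[ℂ] (EuclideanSpace ℂ (Fin d) → ℂ)) (hinj : Function.Injective ι)
    (hholo : ∀ f : X, DifferentiableOn ℂ (ι f) Ω)
    (hptw : ∀ (g : ℕ → X) (f : X), Filter.Tendsto g Filter.atTop (nhds f) →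
      ∀ z ∈ Ω, Filter.Tendsto (fun n => ι (g n) z) Filter.atTop (nhds (ι f z)))
    (hnot : ∀ f : X, ExtendableRiemann Ω (ι f)) :
    ∃ (c₁ c₂ : EuclideanSpace ℂ (Fin d)) (r₁ r₂ : ℝ), 0 < r₁ ∧ 0 < r₂ ∧
      closedBall c₁ r₁ ⊆ ball c₂ r₂ ∩ Ω ∧
      (ball c₂ r₂ ∩ Ω).Nonempty ∧ (ball c₂ r₂ ∩ Ωᶜ).Nonempty ∧
      ∀ f : X, ∃ (F : EuclideanSpace ℂ (Fin d) → ℂ) (M : ℝ),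
        DifferentiableOn ℂ F (ball c₂ r₂) ∧
        (∀ z ∈ ball c₂ r₂, ‖F z‖ ≤ M) ∧
        EqOn F (ι f) (ball c₁ r₁) :=
  stmt15_general Ω X ι hptw hnot
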